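/- Let X be a complex Hilbert space, T(t), t ≥ 0, an exponentially stable strongly continuous semigroup on X, and R : X → X the bounded operator R x = ∫₀^∞ T(t)x dt. Let D = range(R) and let C : D → X be a linear map such that C ∘ R is bounded on X and C(R y) = R(C y) for all y ∈ D. Define the Lebesgue extension C_L by: x ∈ D(C_L) iff C_L x := lim_{t↓0} (1/t) C(R x - R(T(t)x)) exists. Then for every x ∈ D(C_L) one has R(C_L x) = C(R x); in particular R x ∈ D(C_L) and C_L(R x) = C(R x), i.e. the Lebesgue extension commutes with A^{-1} = -R. -/

import Mathlib

/-!
Since `R x - R (T t x) = ∫₀ᵗ T τ x dτ`, the fundamental theorem of calculus at `0` makes the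
difference quotients `(1/t) • (R x - R (T t x))` converge to `x`. As `T t` commutes with `R`,
applying the bounded operator `C ∘ R` to these quotients gives the second claim. For the first,
`C R = R C` on `range R` turns `R` of the quotients defining `C_L x` into the quotients of the
second claim, so `R (C_L x)` is their limit `C (R x)`.
-/

open MeasureTheory Set Filter Topology

section IntervalIntegral

variable {E : Type*} [NormedAddCommGroup E]

theorem integrableOn_Ioi_of_continuousOn_of_norm_le_exp {f : ℝ → E} {c ω : ℝ} (hω : 0 < ω)
    (hf : ContinuousOn f (Ici 0))
    (hbound : ∀ t, 0 ≤ t → ‖f t‖ ≤ c * Real.exp (-ω * t)) :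
    IntegrableOn f (Ioi 0) :=
  ((exp_neg_integrableOn_Ioi 0 hω).const_mul c).mono'
    ((hf.mono Ioi_subset_Ici_self).aestronglyMeasurable measurableSet_Ioi)
    ((ae_restrict_mem measurableSet_Ioi).mono fun t ht => hbound t (le_of_lt ht))

theorem setIntegral_Ioi_comp_add_right [NormedSpace ℝ E] (f : ℝ → E) (a t : ℝ) :
    ∫ τ in Ioi a, f (τ + t) = ∫ τ in Ioi (a + t), f τ := by
  have key := (measurePreserving_add_right volume t).setIntegral_preimage_emb
    (measurableEmbedding_addRight t) f (Ioi (a + t))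
  rwa [preimage_add_const_Ioi, add_sub_cancel_right] at key

theorem tendsto_inv_smul_intervalIntegral_nhdsGT [NormedSpace ℝ E] [CompleteSpace E]
    {f : ℝ → E} {a : ℝ} (hf : ContinuousOn f (Ici a)) :
    Tendsto (fun t => (t - a)⁻¹ • ∫ τ in a..t, f τ) (𝓝[>] a) (𝓝 (f a)) := by
  have hderiv : HasDerivWithinAt (fun t => ∫ τ in a..t, f τ) (f a) (Ici a) a :=
    intervalIntegral.integral_hasDerivWithinAt_right (t := Ioi a) IntervalIntegrable.refl
      ((hf.mono Ioi_subset_Ici_self).stronglyMeasurableAtFilter_nhdsWithin measurableSet_Ioi a)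
      ((hf a self_mem_Ici).mono Ioi_subset_Ici_self)
  refine ((hasDerivWithinAt_iff_tendsto_slope' (lt_irrefl a)).1
    (hderiv.mono Ioi_subset_Ici_self)).congr fun t => ?_
  simp [slope_def_module]

end IntervalIntegral

section Semigroup

variable {𝕜 E : Type*} [RCLike 𝕜] [NormedAddCommGroup E] [NormedSpace 𝕜 E]
  {T : ℝ → E →L[𝕜] E}

theorem integrableOn_Ioi_orbit {M ω : ℝ} (hω : 0 < ω)
    (hTcont : ∀ x : E, ContinuousOn (fun t => T t x) (Ici 0))
    (hTexp : ∀ t : ℝ, 0 ≤ t → ‖T t‖ ≤ M * Real.exp (-ω * t)) (x : E) :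
    IntegrableOn (fun t => T t x) (Ioi 0) :=
  integrableOn_Ioi_of_continuousOn_of_norm_le_exp (c := M * ‖x‖) hω (hTcont x) fun t ht =>
    calc ‖T t x‖ ≤ ‖T t‖ * ‖x‖ := (T t).le_opNorm x
      _ ≤ M * Real.exp (-ω * t) * ‖x‖ := by gcongr; exact hTexp t ht
      _ = M * ‖x‖ * Real.exp (-ω * t) := by ring

variable [NormedSpace ℝ E]

theorem apply_setIntegral_Ioi_orbit [CompleteSpace E]
    (hTsemi : ∀ s t : ℝ, 0 ≤ s → 0 ≤ t → T (s + t) = (T s).comp (T t)) {x : E}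
    (hx : IntegrableOn (fun t => T t x) (Ioi 0)) {t : ℝ} (ht : 0 ≤ t) :
    T t (∫ τ in Ioi 0, T τ x) = ∫ τ in Ioi 0, T τ (T t x) := by
  rw [← (T t).integral_comp_comm hx]
  refine setIntegral_congr_fun measurableSet_Ioi fun τ hτ => ?_
  simp only [← ContinuousLinearMap.comp_apply, ← hTsemi _ _ ht (le_of_lt hτ),
    ← hTsemi _ _ (le_of_lt hτ) ht, add_comm]

theorem setIntegral_Ioi_orbit_sub_shift
    (hTsemi : ∀ s t : ℝ, 0 ≤ s → 0 ≤ t → T (s + t) = (T s).comp (T t)) {x : E}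
    (hx : IntegrableOn (fun t => T t x) (Ioi 0)) {t : ℝ} (ht : 0 ≤ t) :
    (∫ τ in Ioi 0, T τ x) - ∫ τ in Ioi 0, T τ (T t x) = ∫ τ in 0..t, T τ x := by
  have hshift : ∫ τ in Ioi 0, T τ (T t x) = ∫ τ in Ioi t, T τ x := by
    rw [← zero_add t, ← setIntegral_Ioi_comp_add_right (fun τ => T τ x), zero_add]
    refine setIntegral_congr_fun measurableSet_Ioi fun τ hτ => ?_
    simp only [hTsemi _ _ (le_of_lt hτ) ht, ContinuousLinearMap.comp_apply]
  rw [hshift, intervalIntegral.integral_Ioi_sub_Ioi hx ht]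

theorem tendsto_inv_smul_setIntegral_Ioi_orbit_sub_shift [CompleteSpace E] (hT0 : T 0 = 1)
    (hTsemi : ∀ s t : ℝ, 0 ≤ s → 0 ≤ t → T (s + t) = (T s).comp (T t)) {x : E}
    (hTcont : ContinuousOn (fun t => T t x) (Ici 0))
    (hx : IntegrableOn (fun t => T t x) (Ioi 0)) :
    Tendsto (fun t => t⁻¹ • ((∫ τ in Ioi 0, T τ x) - ∫ τ in Ioi 0, T τ (T t x)))
      (𝓝[>] 0) (𝓝 x) := by
  have hlim := tendsto_inv_smul_intervalIntegral_nhdsGT hTcont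
  simp only [hT0, sub_zero, one_apply_eq_self] at hlim
  refine hlim.congr' (eventually_nhdsWithin_of_forall fun t ht => ?_)
  simp only [setIntegral_Ioi_orbit_sub_shift hTsemi hx (le_of_lt ht)]

end Semigroup

theorem lebesgue_extension_commutes_with_inverse_general
    {X : Type*} [NormedAddCommGroup X] [InnerProductSpace ℂ X] [CompleteSpace X]
    (T : ℝ → X →L[ℂ] X) (M ω : ℝ) (hω : 0 < ω)
    (hT0 : T 0 = 1)
    (hTsemi : ∀ s t : ℝ, 0 ≤ s → 0 ≤ t → T (s + t) = (T s).comp (T t))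
    (hTcont : ∀ x : X, ContinuousOn (fun t => T t x) (Ici (0 : ℝ)))
    (hTexp : ∀ t : ℝ, 0 ≤ t → ‖T t‖ ≤ M * Real.exp (-ω * t))
    (R : X →L[ℂ] X)
    (hR : ∀ x : X, R x = ∫ t in Ioi (0 : ℝ), T t x)
    (C : X →ₗ[ℂ] X) (K : ℝ)
    (hCR : ∀ x : X, ‖C (R x)‖ ≤ K * ‖x‖)
    (hCRcomm : ∀ y ∈ Set.range R, C (R y) = R (C y)) :
    (∀ x z : X,
      Tendsto (fun t : ℝ => (1 / t) • C (R x - R (T t x)))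
        (nhdsWithin 0 (Ioi (0 : ℝ))) (nhds z) → R z = C (R x)) ∧
    (∀ x : X,
      Tendsto (fun t : ℝ => (1 / t) • C (R (R x) - R (T t (R x))))
        (nhdsWithin 0 (Ioi (0 : ℝ))) (nhds (C (R x)))) := by
  have hInt := integrableOn_Ioi_orbit hω hTcont hTexp
  have hcomm : ∀ t, 0 ≤ t → ∀ x, T t (R x) = R (T t x) := fun t ht x => by
    rw [hR, hR, apply_setIntegral_Ioi_orbit hTsemi (hInt x) ht]
  have hlim : ∀ x, Tendsto (fun t : ℝ => (1 / t) • (R x - R (T t x))) (𝓝[>] 0) (𝓝 x) :=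
    fun x => by
      simpa only [hR, one_div] using
        tendsto_inv_smul_setIntegral_Ioi_orbit_sub_shift hT0 hTsemi (hTcont x) (hInt x)
  have hRquot : ∀ t, 0 ≤ t → ∀ x, R (R x) - R (T t (R x)) = R (R x - R (T t x)) :=
    fun t ht x => by rw [map_sub, hcomm t ht]
  let CR : X →L[ℂ] X := (C ∘ₗ R.toLinearMap).mkContinuous K hCR
  have hlimCR : ∀ x, Tendsto (fun t : ℝ => (1 / t) • C (R (R x) - R (T t (R x))))
      (𝓝[>] 0) (𝓝 (C (R x))) := fun x =>
    ((CR.continuous.tendsto x).comp (hlim x)).congr' <|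
      eventually_nhdsWithin_of_forall fun t ht => by
        simp [CR, hRquot t (le_of_lt ht)]
  refine ⟨fun x z hz => tendsto_nhds_unique ?_ (hlimCR x), hlimCR⟩
  refine ((R.continuous.tendsto z).comp hz).congr' <|
    eventually_nhdsWithin_of_forall fun t ht => ?_
  dsimp only [Function.comp_apply]
  rw [R.map_smul_of_tower, hRquot t (le_of_lt ht), ← map_sub, hCRcomm _ (mem_range_self _)]

/-- For an exponentially stable strongly continuous semigroup `T` with
`R x = ∫₀^∞ T t x dt = -A⁻¹ x`, and `C` on `D = range R` with `C ∘ R` bounded and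
`C (R y) = R (C y)` on `D`, the Lebesgue extension
`C_L x = lim_{t ↓ 0} (1/t) C (R x - R (T t x))` satisfies `R (C_L x) = C (R x)` on its
domain; in particular `R x ∈ D(C_L)` with `C_L (R x) = C (R x)`. -/
theorem lebesgue_extension_commutes_with_inverse
    {X : Type*} [NormedAddCommGroup X] [InnerProductSpace ℂ X] [CompleteSpace X]
    (T : ℝ → X →L[ℂ] X) (M ω : ℝ) (hM : 1 ≤ M) (hω : 0 < ω)
    (hT0 : T 0 = 1)
    (hTsemi : ∀ s t : ℝ, 0 ≤ s → 0 ≤ t → T (s + t) = (T s).comp (T t))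
    (hTcont : ∀ x : X, ContinuousOn (fun t => T t x) (Ici (0 : ℝ)))
    (hTexp : ∀ t : ℝ, 0 ≤ t → ‖T t‖ ≤ M * Real.exp (-ω * t))
    (R : X →L[ℂ] X)
    (hR : ∀ x : X, R x = ∫ t in Ioi (0 : ℝ), T t x)
    (C : X →ₗ[ℂ] X) (K : ℝ)
    (hCR : ∀ x : X, ‖C (R x)‖ ≤ K * ‖x‖)
    (hCRcomm : ∀ y ∈ Set.range R, C (R y) = R (C y)) :
    (∀ x z : X,
      Tendsto (fun t : ℝ => (1 / t) • C (R x - R (T t x)))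
        (nhdsWithin 0 (Ioi (0 : ℝ))) (nhds z) → R z = C (R x)) ∧
    (∀ x : X,
      Tendsto (fun t : ℝ => (1 / t) • C (R (R x) - R (T t (R x))))
        (nhdsWithin 0 (Ioi (0 : ℝ))) (nhds (C (R x)))) :=
  lebesgue_extension_commutes_with_inverse_general T M ω hω hT0 hTsemi hTcont hTexp R hR C K hCR
    hCRcomm
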